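/- arXiv:cs/0204002 — 2 statements merged into one kernel-verified Lean document; each statement's English description precedes it below -/
import Mathlib

section
/- On the square grid ℤ², the span of any finite configuration is a disjoint union of full rectangles of lattice points, any two of which are at L¹-distance at least 3 from each other. -/
/-!
A set closed under the spanning rule that contains a full rectangle `R` and a point `p` at
`ℓ¹`-distance at most 2 from `R` contains the bounding box of `R ∪ {p}`. At distance 2, `p` and
its nearest point of `R` have a common neighbour, which is in the set and adjacent to `R`. A point
adjacent to `R` fills, cell by cell, the row or column it adds to the box: each new cell has one
neighbour in `R` and one nearer to `p`.

Group the points of the (finite, closed) span into clusters, the classes of being joined by a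
chain of steps of length at most 2. Walking along such a chain shows that the bounding box of any
two points of a cluster lies in the cluster, so each cluster is the box between its meet and its
join. Distinct clusters are at distance at least 3 by construction.
-/

/-- The span of a set of positions: the least superset closed under adding any
vertex adjacent to at least 2 vertices of the set. -/
def Span {P : Type*} (G : SimpleGraph P) (C : Set P) : Set P :=
  ⋂₀ {S : Set P | C ⊆ S ∧ ∀ p, (∃ a ∈ S, ∃ b ∈ S, a ≠ b ∧ G.Adj p a ∧ G.Adj p b) → p ∈ S}


/-- The square grid on ℤ². -/
def Grid : SimpleGraph (ℤ × ℤ) where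
  Adj p q := |p.1 - q.1| + |p.2 - q.2| = 1
  symm := ⟨by intro p q h; (try dsimp only at h ⊢); rw [abs_sub_comm q.1 p.1, abs_sub_comm q.2 p.2]; exact h⟩
  loopless := ⟨by intro p; simp⟩

open Set

def SpanClosed {P : Type*} (G : SimpleGraph P) (T : Set P) : Prop :=
  ∀ p, (∃ a ∈ T, ∃ b ∈ T, a ≠ b ∧ G.Adj p a ∧ G.Adj p b) → p ∈ T

section SpanClosed

variable {P : Type*} {G : SimpleGraph P}

theorem SpanClosed.mem {T : Set P} (hT : SpanClosed G T) {p a b : P} (ha : a ∈ T) (hb : b ∈ T)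
    (hab : a ≠ b) (hpa : G.Adj p a) (hpb : G.Adj p b) : p ∈ T :=
  hT p ⟨a, ha, b, hb, hab, hpa, hpb⟩

theorem spanClosed_span (C : Set P) : SpanClosed G (Span G C) := by
  rintro p ⟨a, ha, b, hb, hab, hpa, hpb⟩ S hS
  exact hS.2 p ⟨a, ha S hS, b, hb S hS, hab, hpa, hpb⟩

theorem span_subset {C T : Set P} (hCT : C ⊆ T) (hT : SpanClosed G T) : Span G C ⊆ T :=
  sInter_subset_of_mem ⟨hCT, hT⟩

end SpanClosed

theorem Set.Finite.exists_eq_Icc_of_forall_uIcc_subset {α : Type*} [Lattice α] {s : Set α}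
    (hs : s.Finite) (hne : s.Nonempty) (h : ∀ a ∈ s, ∀ b ∈ s, uIcc a b ⊆ s) :
    ∃ lo hi, s = Icc lo hi := by
  have hne' : hs.toFinset.Nonempty := hs.toFinset_nonempty.2 hne
  have hmem : ∀ x ∈ hs.toFinset, id x ∈ s := fun x hx => hs.mem_toFinset.1 hx
  have hinf : hs.toFinset.inf' hne' id ∈ s :=
    Finset.inf'_mem s (fun a ha b hb => h a ha b hb ⟨le_rfl, inf_le_sup⟩) _ hne' id hmem
  have hsup : hs.toFinset.sup' hne' id ∈ s :=
    Finset.sup'_mem s (fun a ha b hb => h a ha b hb ⟨inf_le_sup, le_rfl⟩) _ hne' id hmem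
  refine ⟨_, _, Subset.antisymm (fun x hx => ⟨?_, ?_⟩) (Icc_subset_uIcc.trans (h _ hinf _ hsup))⟩
  · exact Finset.inf'_le id (hs.mem_toFinset.2 hx)
  · exact Finset.le_sup' id (hs.mem_toFinset.2 hx)

namespace Grid

def l1Dist (p q : ℤ × ℤ) : ℤ := |p.1 - q.1| + |p.2 - q.2|

theorem l1Dist_comm (p q : ℤ × ℤ) : l1Dist p q = l1Dist q p := by
  simp only [l1Dist, abs_sub_comm]

theorem l1Dist_nonneg (p q : ℤ × ℤ) : 0 ≤ l1Dist p q :=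
  add_nonneg (abs_nonneg _) (abs_nonneg _)

theorem adj_iff_l1Dist_eq_one {p q : ℤ × ℤ} : Grid.Adj p q ↔ l1Dist p q = 1 := Iff.rfl

theorem spanClosed_Icc (lo hi : ℤ × ℤ) : SpanClosed Grid (Icc lo hi) := by
  rintro p ⟨a, ha, b, hb, hab, hpa, hpb⟩
  rw [Ne, Prod.ext_iff] at hab
  simp only [mem_Icc, Prod.le_def, adj_iff_l1Dist_eq_one, l1Dist, abs_eq_max_neg] at *
  omega

theorem span_finite (C : Finset (ℤ × ℤ)) : (Span Grid (C : Set (ℤ × ℤ))).Finite := by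
  obtain ⟨lo, hlo⟩ := C.finite_toSet.bddBelow
  obtain ⟨hi, hhi⟩ := C.finite_toSet.bddAbove
  exact (finite_Icc lo hi).subset
    (span_subset (fun p hp => ⟨hlo hp, hhi hp⟩) (spanClosed_Icc lo hi))

theorem exists_adj_adj_of_l1Dist_eq_two {p r : ℤ × ℤ} (h : l1Dist p r = 2) :
    ∃ m, Grid.Adj p m ∧ Grid.Adj m r := by
  -- step from `r` towards `p`, horizontally if possible
  refine ⟨(r.1 + max (-1) (min (p.1 - r.1) 1), p.2 - max (-1) (min (p.2 - r.2) 1)), ?_, ?_⟩ <;>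
  simp only [adj_iff_l1Dist_eq_one, l1Dist, abs_eq_max_neg] at * <;> omega

theorem exists_adj_adj_of_mem_Icc_inf_sup {lo hi r p q : ℤ × ℤ} (hr : r ∈ Icc lo hi)
    (hpr : Grid.Adj p r) (hq : q ∈ Icc (lo ⊓ p) (hi ⊔ p)) (hqbox : q ∉ Icc lo hi) (hqp : q ≠ p) :
    ∃ q' ∈ Icc (lo ⊓ p) (hi ⊔ p), l1Dist q' p < l1Dist q p ∧
      ∃ r' ∈ Icc lo hi, q' ≠ r' ∧ Grid.Adj q q' ∧ Grid.Adj q r' := by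
  obtain ⟨a, c⟩ := lo; obtain ⟨b, d⟩ := hi; obtain ⟨u, v⟩ := p; obtain ⟨x, y⟩ := q
  obtain ⟨rx, ry⟩ := r
  simp only [Ne, Prod.ext_iff, mem_Icc, Prod.mk_le_mk, Prod.mk_inf_mk, Prod.mk_sup_mk,
    adj_iff_l1Dist_eq_one, l1Dist, abs_eq_max_neg] at hr hpr hq hqbox hqp
  have hline : a ≤ b ∧ c ≤ d ∧ ((x = u ∧ (x = b + 1 ∨ x = a - 1) ∧ c ≤ y ∧ y ≤ d ∧ y ≠ v) ∨
      (y = v ∧ (y = d + 1 ∨ y = c - 1) ∧ a ≤ x ∧ x ≤ b ∧ x ≠ u)) := by omega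
  clear hr hpr hqbox hqp
  -- `q'` is one step from `q` towards `p`, and `r'` is the point of the box nearest to `q`
  refine ⟨(x + max (-1) (min (u - x) 1), y + max (-1) (min (v - y) 1)), ?_, ?_,
    (max a (min x b), max c (min y d)), ?_, ?_, ?_, ?_⟩
  · simp only [mem_Icc, Prod.mk_le_mk, Prod.mk_inf_mk, Prod.mk_sup_mk]; omega
  · simp only [l1Dist, abs_eq_max_neg]; omega
  · simp only [mem_Icc, Prod.mk_le_mk]; omega
  · simp only [Ne, Prod.ext_iff]; omega
  all_goals simp only [adj_iff_l1Dist_eq_one, l1Dist, abs_eq_max_neg]; omega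

section Closed

variable {T : Set (ℤ × ℤ)} (hT : SpanClosed Grid T) {lo hi r p : ℤ × ℤ}
  (hbox : Icc lo hi ⊆ T) (hr : r ∈ Icc lo hi) (hp : p ∈ T)
include hT hbox hr hp

theorem Icc_inf_sup_subset_of_adj (hpr : Grid.Adj p r) : Icc (lo ⊓ p) (hi ⊔ p) ⊆ T := by
  suffices ∀ n : ℕ, ∀ q ∈ Icc (lo ⊓ p) (hi ⊔ p), (l1Dist q p).toNat = n → q ∈ T from
    fun q hq => this _ q hq rfl
  intro n
  induction n using Nat.strong_induction_on with
  | _ n ih =>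
  intro q hq hn
  by_cases hqbox : q ∈ Icc lo hi
  · exact hbox hqbox
  by_cases hqp : q = p
  · exact hqp ▸ hp
  obtain ⟨q', hq', hq'p, r', hr', hne, hqq', hqr'⟩ :=
    exists_adj_adj_of_mem_Icc_inf_sup hr hpr hq hqbox hqp
  have := l1Dist_nonneg q' p
  exact hT.mem (ih _ (by omega) q' hq' rfl) (hbox hr') hne hqq' hqr'

theorem Icc_inf_sup_subset (hpr : l1Dist p r ≤ 2) : Icc (lo ⊓ p) (hi ⊔ p) ⊆ T := by
  have := l1Dist_nonneg p r
  obtain hpr | hpr | hpr : l1Dist p r = 0 ∨ l1Dist p r = 1 ∨ l1Dist p r = 2 := by omega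
  · have hpr : p = r := by
      rw [Prod.ext_iff]; simp only [l1Dist, abs_eq_max_neg] at hpr; omega
    subst hpr
    rwa [inf_eq_left.2 hr.1, sup_eq_left.2 hr.2]
  · exact Icc_inf_sup_subset_of_adj hT hbox hr hp hpr
  · obtain ⟨m, hpm, hmr⟩ := exists_adj_adj_of_l1Dist_eq_two hpr
    have hm : m ∈ T := hT.mem (hbox hr) hp (fun h => by simp [h, l1Dist] at hpr) hmr hpm.symm
    have hbox' := Icc_inf_sup_subset_of_adj hT hbox hr hm hmr
    refine Subset.trans (Icc_subset_Icc ?_ ?_)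
      (Icc_inf_sup_subset_of_adj hT hbox' ⟨inf_le_right, le_sup_right⟩ hp hpm)
    · exact inf_le_inf_right p inf_le_left
    · exact sup_le_sup_right le_sup_left p

end Closed

def nearGraph (S : Set (ℤ × ℤ)) : SimpleGraph (ℤ × ℤ) where
  Adj p q := p ≠ q ∧ p ∈ S ∧ q ∈ S ∧ l1Dist p q ≤ 2
  symm := ⟨fun p q ⟨hpq, hp, hq, h⟩ => ⟨hpq.symm, hq, hp, l1Dist_comm p q ▸ h⟩⟩
  loopless := ⟨fun _ h => h.1 rfl⟩

def cluster (S : Set (ℤ × ℤ)) (p : ℤ × ℤ) : Set (ℤ × ℤ) := {q | (nearGraph S).Reachable p q}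

section Cluster

variable {S : Set (ℤ × ℤ)} {p : ℤ × ℤ}

theorem nearGraph_adj {q : ℤ × ℤ} :
    (nearGraph S).Adj p q ↔ p ≠ q ∧ p ∈ S ∧ q ∈ S ∧ l1Dist p q ≤ 2 := Iff.rfl

theorem mem_cluster_self : p ∈ cluster S p := SimpleGraph.Reachable.refl p

theorem cluster_eq_of_mem {q : ℤ × ℤ} (hq : q ∈ cluster S p) : cluster S q = cluster S p :=
  ext fun _ => ⟨hq.trans, hq.symm.trans⟩

theorem cluster_subset (hp : p ∈ S) : cluster S p ⊆ S := by
  intro q hq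
  induction (SimpleGraph.reachable_iff_reflTransGen p q).1 hq with
  | refl => exact hp
  | tail _ hadj _ => exact (nearGraph_adj.1 hadj).2.2.1

theorem spanClosed_cluster (hS : SpanClosed Grid S) (hp : p ∈ S) :
    SpanClosed Grid (cluster S p) := by
  rintro z ⟨a, ha, b, hb, hab, hza, hzb⟩
  have hz : z ∈ S := hS.mem (cluster_subset hp ha) (cluster_subset hp hb) hab hza hzb
  have hdist : l1Dist a z ≤ 2 := (adj_iff_l1Dist_eq_one.1 hza.symm).trans_le one_le_two
  exact ha.trans (nearGraph_adj.2 ⟨hza.ne.symm, cluster_subset hp ha, hz, hdist⟩).reachable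

theorem uIcc_subset_cluster (hS : SpanClosed Grid S) (hp : p ∈ S) {q q' : ℤ × ℤ}
    (hq : q ∈ cluster S p) (hq' : q' ∈ cluster S p) : uIcc q q' ⊆ cluster S p := by
  have hqq' := (SimpleGraph.reachable_iff_reflTransGen q q').1 (hq.symm.trans hq')
  clear hq'
  induction hqq' with
  | refl => simpa using hq
  | @tail m c _ hmc ih =>
    have hm : m ∈ cluster S p := ih right_mem_uIcc
    refine Subset.trans (Icc_subset_Icc ?_ ?_) (Icc_inf_sup_subset (spanClosed_cluster hS hp) ih
      right_mem_uIcc (hm.trans hmc.reachable) (l1Dist_comm c m ▸ (nearGraph_adj.1 hmc).2.2.2))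
    · exact inf_le_inf_right c inf_le_left
    · exact sup_le_sup_right le_sup_left c

theorem three_le_l1Dist_of_cluster_ne {q p' q' : ℤ × ℤ} (hne : cluster S p ≠ cluster S q)
    (hp' : p' ∈ cluster S p) (hq' : q' ∈ cluster S q) (hp'S : p' ∈ S) (hq'S : q' ∈ S) :
    3 ≤ l1Dist p' q' := by
  by_contra! hlt
  have hreach : (nearGraph S).Reachable p' q' := by
    by_cases hpq : p' = q'
    · exact hpq ▸ SimpleGraph.Reachable.refl p'
    · exact (nearGraph_adj.2 ⟨hpq, hp'S, hq'S, by omega⟩).reachable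
  exact hne ((cluster_eq_of_mem hp').symm.trans
    ((cluster_eq_of_mem hreach).symm.trans (cluster_eq_of_mem hq')))

end Cluster

end Grid

open Grid

/-- The span of a finite configuration on the square grid is a disjoint union of
full rectangles, any two of which are at L¹-distance at least 3. -/
theorem span_union_of_rectangles (C : Finset (ℤ × ℤ)) :
    ∃ R : Set (Set (ℤ × ℤ)),
      Span Grid ↑C = ⋃₀ R ∧
      (∀ r ∈ R, ∃ x₀ x₁ y₀ y₁ : ℤ, r = Set.Icc x₀ x₁ ×ˢ Set.Icc y₀ y₁) ∧
      (∀ r ∈ R, ∀ s ∈ R, r ≠ s → ∀ p ∈ r, ∀ q ∈ s,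
        3 ≤ |p.1 - q.1| + |p.2 - q.2|) := by
  set S := Span Grid (C : Set (ℤ × ℤ))
  have hS : SpanClosed Grid S := spanClosed_span _
  refine ⟨cluster S '' S, ?_, ?_, ?_⟩
  · ext q
    simp only [mem_sUnion, mem_image, exists_exists_and_eq_and]
    exact ⟨fun hq => ⟨q, hq, mem_cluster_self⟩, fun ⟨p, hp, hq⟩ => cluster_subset hp hq⟩
  · rintro _ ⟨p, hp, rfl⟩
    obtain ⟨lo, hi, h⟩ := Set.Finite.exists_eq_Icc_of_forall_uIcc_subset
      ((span_finite C).subset (cluster_subset hp)) ⟨p, mem_cluster_self⟩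
      (fun _ hq _ hq' => uIcc_subset_cluster hS hp hq hq')
    exact ⟨lo.1, hi.1, lo.2, hi.2, h.trans (Icc_prod_eq lo hi)⟩
  · rintro _ ⟨p, hp, rfl⟩ _ ⟨q, hq, rfl⟩ hne p' hp' q' hq'
    exact three_le_l1Dist_of_cluster_ne hne hp' hq' (cluster_subset hp hp')
      (cluster_subset hq hq')
end

section
/- On the triangular grid with unlabeled coins, if configuration A can be re-arranged into a different configuration B by valid 2-adjacent moves, and B contains no triangle, no connected component of size ≥ 4, and no pair of components of sizes ≥ 3 and ≥ 2 respectively, then B is reachable from A by a single valid move. -/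
/-- A valid 2-adjacent move on board `G`: take a token at `q ∈ C`, place it at an
unoccupied `p` adjacent to at least 2 tokens of `C` other than `q`. -/
def ValidMove {P : Type*} [DecidableEq P] (G : SimpleGraph P) (C C' : Finset P) : Prop :=
  ∃ q ∈ C, ∃ p, p ∉ C ∧
    (∃ a ∈ C.erase q, ∃ b ∈ C.erase q, a ≠ b ∧ G.Adj p a ∧ G.Adj p b) ∧
    C' = insert p (C.erase q)

/-- Reachability by a finite sequence of valid 2-adjacent moves. -/
def Reach {P : Type*} [DecidableEq P] (G : SimpleGraph P) : Finset P → Finset P → Prop :=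
  Relation.ReflTransGen (ValidMove G)


/-- The triangular grid on ℤ²: `(x,y)` is adjacent to `(x±1,y)`, `(x,y±1)`,
`(x+1,y−1)`, `(x−1,y+1)`; equivalently `a² + ab + b² = 1` for the difference `(a,b)`. -/
def TriGrid : SimpleGraph (ℤ × ℤ) where
  Adj p q := (p.1 - q.1)^2 + (p.1 - q.1) * (p.2 - q.2) + (p.2 - q.2)^2 = 1
  symm := by constructor; intro p q h; linear_combination h
  loopless := by constructor; intro p; simp

/-- Connectivity within a configuration: a path through occupied positions. -/
def ConnIn (B : Finset (ℤ × ℤ)) : (ℤ × ℤ) → (ℤ × ℤ) → Prop :=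
  Relation.ReflTransGen (fun u v => u ∈ B ∧ v ∈ B ∧ TriGrid.Adj u v)

/-- The connected component of `x` in the configuration `B`. -/
def CompOf (B : Finset (ℤ × ℤ)) (x : ℤ × ℤ) : Set (ℤ × ℤ) :=
  {y ∈ (↑B : Set (ℤ × ℤ)) | ConnIn B x y}

/-!
Let `D → B` be the last move of the sequence, placing a coin at `p`. Then `p` has two
neighbours `a, b` in `B`, which are not adjacent (no triangle), so the component of `p`
is exactly `{p, a, b}`; by the condition on pairs of components, every other component is
a singleton, i.e. `B \ {p}` is independent. Now look at the move `C → D` before it, placing a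
coin at `s`. If `s` were not the coin moved away in `D → B`, it would stay in `B \ {p}` with a
neighbour there. Hence `D → B` moves the very coin just placed, and `C → D → B` collapses to
one move (or none). Induction along the sequence finishes the proof.
-/

theorem Relation.ReflTransGen.eq_or_of_shortcut {α : Type*} {r : α → α → Prop} {a b : α}
    (hr : ∀ x y, r x y → r y b → x = b ∨ r x b) (h : ReflTransGen r a b) :
    a = b ∨ r a b := by
  induction h using ReflTransGen.head_induction_on with
  | refl => exact Or.inl rfl
  | head hxy _ ih =>
    rcases ih with rfl | hyb
    · exact Or.inr hxy
    · exact hr _ _ hxy hyb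

section ValidMove

variable {P : Type*} [DecidableEq P] {G : SimpleGraph P}

theorem ValidMove.eq_or_validMove_of_isIndepSet {C D : Finset P} {p q : P}
    (hCD : ValidMove G C D) (hpD : p ∉ D)
    (hnbrs : ∃ a ∈ D.erase q, ∃ b ∈ D.erase q, a ≠ b ∧ G.Adj p a ∧ G.Adj p b)
    (hind : G.IsIndepSet ↑(D.erase q)) :
    C = insert p (D.erase q) ∨ ValidMove G C (insert p (D.erase q)) := by
  obtain ⟨r, hrC, s, hsC, ⟨a, ha, b, hb, hab, hsa, hsb⟩, rfl⟩ := hCD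
  have hCr : (insert s (C.erase r)).erase s = C.erase r :=
    Finset.erase_insert fun h => hsC (Finset.mem_of_mem_erase h)
  by_cases hsq : s = q
  · subst hsq
    rw [hCr] at hnbrs ⊢
    by_cases hrp : r = p
    · exact Or.inl (hrp ▸ (Finset.insert_erase hrC).symm)
    · right
      refine ⟨r, hrC, p, fun hpC => hpD ?_, hnbrs, rfl⟩
      exact Finset.mem_insert_of_mem (Finset.mem_erase.mpr ⟨Ne.symm hrp, hpC⟩)
  · exfalso
    have hs : s ∈ (insert s (C.erase r)).erase q :=
      Finset.mem_erase.mpr ⟨hsq, Finset.mem_insert_self s _⟩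
    have nbr_eq_q : ∀ w ∈ C.erase r, G.Adj s w → w = q := fun w hw hsw => by
      by_contra hwq
      have hw' : w ∈ (insert s (C.erase r)).erase q :=
        Finset.mem_erase.mpr ⟨hwq, Finset.mem_insert_of_mem hw⟩
      exact hind hs hw' hsw.ne hsw
    exact hab ((nbr_eq_q a ha hsa).trans (nbr_eq_q b hb hsb).symm)

end ValidMove

section CompOf

variable {B : Finset (ℤ × ℤ)} {u v : ℤ × ℤ}

theorem CompOf.finite (B : Finset (ℤ × ℤ)) (x : ℤ × ℤ) : (CompOf B x).Finite :=
  B.finite_toSet.subset fun _ hy => hy.1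

theorem mem_compOf_self (hu : u ∈ B) : u ∈ CompOf B u := ⟨hu, .refl⟩

theorem ConnIn.of_adj (hu : u ∈ B) (hv : v ∈ B) (huv : TriGrid.Adj u v) : ConnIn B u v :=
  .single ⟨hu, hv, huv⟩

theorem two_le_ncard_compOf_of_adj (hu : u ∈ B) (hv : v ∈ B) (huv : TriGrid.Adj u v) :
    2 ≤ (CompOf B u).ncard := by
  have hsub : ({u, v} : Set (ℤ × ℤ)) ⊆ CompOf B u := by
    rintro y (rfl | rfl)
    exacts [mem_compOf_self hu, ⟨hv, ConnIn.of_adj hu hv huv⟩]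
  calc 2 = ({u, v} : Set (ℤ × ℤ)).ncard := (Set.ncard_pair huv.ne).symm
    _ ≤ _ := Set.ncard_le_ncard hsub (CompOf.finite B u)

theorem compOf_eq_of_adj_of_adj {p a b : ℤ × ℤ} (hp : p ∈ B) (ha : a ∈ B) (hb : b ∈ B)
    (hab : a ≠ b) (hpa : TriGrid.Adj p a) (hpb : TriGrid.Adj p b)
    (hcard : (CompOf B p).ncard ≤ 3) : CompOf B p = {p, a, b} := by
  have hsub : ({p, a, b} : Set (ℤ × ℤ)) ⊆ CompOf B p := by
    rintro y (rfl | rfl | rfl)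
    exacts [mem_compOf_self hp, ⟨ha, ConnIn.of_adj hp ha hpa⟩, ⟨hb, ConnIn.of_adj hp hb hpb⟩]
  have hthree : ({p, a, b} : Set (ℤ × ℤ)).ncard = 3 :=
    Set.ncard_eq_three.mpr ⟨p, a, b, hpa.ne, hpb.ne, hab, rfl⟩
  exact (Set.eq_of_subset_of_ncard_le hsub (hthree ▸ hcard) (CompOf.finite B p)).symm

theorem isIndepSet_erase_of_adj_of_adj {p a b : ℤ × ℤ} (hp : p ∈ B) (ha : a ∈ B) (hb : b ∈ B)
    (hab : a ≠ b) (hpa : TriGrid.Adj p a) (hpb : TriGrid.Adj p b) (hnab : ¬TriGrid.Adj a b)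
    (hcard : (CompOf B p).ncard ≤ 3)
    (h32 : ¬∃ x ∈ B, ∃ y ∈ B, ¬ConnIn B x y ∧
      3 ≤ (CompOf B x).ncard ∧ 2 ≤ (CompOf B y).ncard) :
    TriGrid.IsIndepSet ↑(B.erase p) := by
  have hcomp := compOf_eq_of_adj_of_adj hp ha hb hab hpa hpb hcard
  intro u hu v hv _ huv
  obtain ⟨hup, huB⟩ := Finset.mem_erase.mp hu
  obtain ⟨hvp, hvB⟩ := Finset.mem_erase.mp hv
  by_cases hconn : ConnIn B p u
  · have hu' : u ∈ CompOf B p := ⟨huB, hconn⟩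
    have hv' : v ∈ CompOf B p := ⟨hvB, hconn.trans (ConnIn.of_adj huB hvB huv)⟩
    rw [hcomp] at hu' hv'
    rcases hu' with rfl | rfl | rfl <;> rcases hv' with rfl | rfl | rfl <;>
      first | contradiction | exact huv.ne rfl | exact hnab huv | exact hnab huv.symm
  · refine h32 ⟨p, hp, u, huB, hconn, ?_, two_le_ncard_compOf_of_adj huB hvB huv⟩
    rw [hcomp, Set.ncard_eq_three.mpr ⟨p, a, b, hpa.ne, hpb.ne, hab, rfl⟩]

end CompOf

/-- On the triangular grid: if `A` can be re-arranged into a different `B`, and `B`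
has no triangle, no component of size ≥ 4, and no pair of components of sizes ≥ 3
and ≥ 2, then `B` is reachable from `A` in a single valid move. -/
theorem tri_condition4 (A B : Finset (ℤ × ℤ))
    (hreach : Reach TriGrid A B) (hne : A ≠ B)
    (htri : ¬∃ a ∈ B, ∃ b ∈ B, ∃ c ∈ B,
      TriGrid.Adj a b ∧ TriGrid.Adj b c ∧ TriGrid.Adj a c)
    (h4 : ∀ x ∈ B, (CompOf B x).ncard ≤ 3)
    (h32 : ¬∃ x ∈ B, ∃ y ∈ B, ¬ConnIn B x y ∧
      3 ≤ (CompOf B x).ncard ∧ 2 ≤ (CompOf B y).ncard) :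
    ValidMove TriGrid A B := by
  have shortcut : ∀ C D, ValidMove TriGrid C D → ValidMove TriGrid D B →
      C = B ∨ ValidMove TriGrid C B := by
    rintro C D hCD ⟨q, -, p, hpD, hnbrs, rfl⟩
    refine hCD.eq_or_validMove_of_isIndepSet hpD hnbrs ?_
    obtain ⟨a, ha, b, hb, hab, hpa, hpb⟩ := hnbrs
    have hp := Finset.mem_insert_self p (D.erase q)
    have ha' : a ∈ insert p (D.erase q) := Finset.mem_insert_of_mem ha
    have hb' : b ∈ insert p (D.erase q) := Finset.mem_insert_of_mem hb
    have hind := isIndepSet_erase_of_adj_of_adj hp ha' hb' hab hpa hpb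
      (fun hab' => htri ⟨p, hp, a, ha', b, hb', hpa, hab', hpb⟩) (h4 p hp) h32
    rwa [Finset.erase_insert fun h => hpD (Finset.mem_of_mem_erase h)] at hind
  exact (hreach.eq_or_of_shortcut shortcut).resolve_left hne
end
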